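/- Let (C, J) be a site and u : T′ → T a morphism of presheaves of sets on C. Then the inverse image functor u^{-1} from abelian sheaves on (C_{/T}, J_T) to abelian sheaves on (C_{/T′}, J_{T′}) admits an exact left adjoint; consequently u^{-1} preserves injective objects. -/

import Mathlib

/-!
STATEMENT 8: For a morphism `u : T′ → T` of presheaves of sets on a site `(C, J)`, the
inverse image functor `u⁻¹` on abelian sheaves of the localized sites admits an exact
left adjoint, and consequently preserves injective objects.
-/

open CategoryTheory Limits Opposite

universe u

noncomputable section

namespace SliceSite

variable {C : Type u} [SmallCategory C]

/-- The sieve on `X` underlying a sieve on `(X, s)` in the category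
`C_{/T} = CostructuredArrow yoneda T` of elements of `T`: it consists of all morphisms
of `C` underlying a morphism of the given sieve. -/
def underSieve {T : Cᵒᵖ ⥤ Type u} (e : CostructuredArrow yoneda T) (R : Sieve e) :
    Sieve e.left where
  arrows Y g := R.arrows (CostructuredArrow.homMk' e g)
  downward_closed := by
    intro Y Y' g hg h
    rw [CostructuredArrow.homMk'_comp]
    exact R.downward_closed (R.downward_closed hg _) _

/-- The induced Grothendieck topology `J_T` on `C_{/T}`: a sieve is covering if and
only if its sieve of underlying morphisms of `C` is `J`-covering. -/
def sliceTopology (J : GrothendieckTopology C) (T : Cᵒᵖ ⥤ Type u) :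
    GrothendieckTopology (CostructuredArrow yoneda T) where
  sieves e R := underSieve e R ∈ J e.left
  top_mem' e := J.superset_covering (fun Y f _ => trivial) (J.top_mem e.left)
  pullback_stable' := by
    intro e e' R η hR
    refine J.superset_covering ?_ (J.pullback_stable η.left hR)
    intro Y f hf
    have p : CostructuredArrow.mk (yoneda.map (f ≫ η.left) ≫ e.hom) =
        CostructuredArrow.mk (yoneda.map f ≫ e'.hom) := by
      rw [Functor.map_comp, Category.assoc, CostructuredArrow.w]
    have heq : CostructuredArrow.homMk' e (f ≫ η.left) =
        eqToHom p ≫ (CostructuredArrow.homMk' e' f ≫ η) := by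
      apply CostructuredArrow.hom_ext
      simp
    have hf' : R.arrows (CostructuredArrow.homMk' e (f ≫ η.left)) := hf
    rw [heq] at hf'
    have := R.downward_closed hf' (eqToHom p.symm)
    show R.arrows (CostructuredArrow.homMk' e' f ≫ η)
    simpa using this
  transitive' := by
    intro e R hR S hS
    refine J.transitive hR _ ?_
    intro Y f hf
    refine J.superset_covering ?_ (hS (f := CostructuredArrow.homMk' e f) hf)
    intro Y' g hg
    show S.arrows (CostructuredArrow.homMk' e (g ≫ f))
    rw [CostructuredArrow.homMk'_comp]
    exact S.downward_closed hg _

end SliceSite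

open SliceSite

namespace Statement8Aux

variable {C : Type u} [SmallCategory C] {T' T : Cᵒᵖ ⥤ Type u} (u : T' ⟶ T)

/-- The "fiber" of `u` over an object `e` of `C_{/T}`: lifts of `e.hom` through `u`. -/
def Fib (e : CostructuredArrow yoneda T) : Type u :=
  {φ : yoneda.obj e.left ⟶ T' // φ ≫ u = e.hom}

/-- The canonical map `e ⟶ (CostructuredArrow.map u).obj (mk φ)` for `φ` in the fiber. -/
def toMapObj (e : CostructuredArrow yoneda T) (φ : Fib u e) :
    e ⟶ (CostructuredArrow.map u).obj (CostructuredArrow.mk φ.1) :=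
  CostructuredArrow.homMk (𝟙 e.left) (by
    dsimp
    rw [yoneda.map_id, Category.id_comp, φ.2])

/-- The discrete family of fiber elements, as a functor to the costructured arrow category
appearing in the pointwise formula for the left Kan extension along
`(CostructuredArrow.map u).op`. -/
def jdisc (X : (CostructuredArrow yoneda T)ᵒᵖ) :
    Discrete (Fib u X.unop) ⥤ CostructuredArrow (CostructuredArrow.map u).op X :=
  Discrete.functor fun φ => CostructuredArrow.mk (Y := op (CostructuredArrow.mk φ.1))
    (toMapObj u X.unop φ).op

lemma jdisc_hom_ext {X : (CostructuredArrow yoneda T)ᵒᵖ}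
    {b : CostructuredArrow (CostructuredArrow.map u).op X} {r : Discrete (Fib u X.unop)}
    (g₁ g₂ : b ⟶ (jdisc u X).obj r) (h : g₁.left.unop.left = g₂.left.unop.left) : g₁ = g₂ := by
  apply CostructuredArrow.hom_ext
  apply Quiver.Hom.unop_inj
  apply CostructuredArrow.hom_ext
  exact h

instance jdisc_final (X : (CostructuredArrow yoneda T)ᵒᵖ) : (jdisc u X).Final := by
  constructor
  intro b
  -- data extracted from `b`
  let f : X.unop ⟶ (CostructuredArrow.map u).obj b.left.unop := b.hom.unop
  let φ₀ : Fib u X.unop := ⟨yoneda.map f.left ≫ b.left.unop.hom, by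
    have := f.w
    dsimp at this ⊢
    rw [Category.assoc]
    simpa using this⟩
  -- the canonical object of `StructuredArrow b (jdisc u X)`
  let h' : CostructuredArrow.mk φ₀.1 ⟶ b.left.unop := CostructuredArrow.homMk f.left rfl
  have hw' : toMapObj u X.unop φ₀ ≫ (CostructuredArrow.map u).map h' = f := by
    apply CostructuredArrow.hom_ext
    simp [toMapObj, h']
  have hw : (CostructuredArrow.map u).op.map h'.op ≫ ((jdisc u X).obj ⟨φ₀⟩).hom = b.hom := by
    have h2 : ((toMapObj u X.unop φ₀) ≫ (CostructuredArrow.map u).map h').op = b.hom := by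
      rw [hw']
      exact Quiver.Hom.op_unop b.hom
    rw [op_comp] at h2
    exact h2
  let g₀ : b ⟶ (jdisc u X).obj ⟨φ₀⟩ := CostructuredArrow.homMk h'.op hw
  let A₀ : StructuredArrow b (jdisc u X) := StructuredArrow.mk g₀
  -- every object receives a map from `A₀`
  have key : ∀ A : StructuredArrow b (jdisc u X), Nonempty (A₀ ⟶ A) := by
    intro A
    set φA := A.right.as with hφA
    have hAr : A.right = ⟨φA⟩ := rfl
    -- the underlying data of `A.hom`
    have gw0 : (CostructuredArrow.map u).op.map A.hom.left ≫ ((jdisc u X).obj A.right).hom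
        = b.hom := by simpa using A.hom.w
    have gw : toMapObj u X.unop φA ≫ (CostructuredArrow.map u).map A.hom.left.unop = f := by
      apply Quiver.Hom.op_inj
      rw [op_comp]
      exact gw0
    have hleft : A.hom.left.unop.left = f.left := by
      have := congrArg CommaMorphism.left gw
      simp [toMapObj] at this
      exact this
    have hφ : φ₀ = φA := by
      apply Subtype.ext
      have h3 := A.hom.left.unop.w
      dsimp [jdisc] at h3
      rw [Category.comp_id] at h3
      show yoneda.map f.left ≫ (unop b.left).hom = _
      rw [← h3]
      exact congrArg (fun g => yoneda.map g ≫ (unop b.left).hom) hleft.symm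
    have hr : (⟨φ₀⟩ : Discrete (Fib u X.unop)) = A.right := by rw [hAr, hφ]
    refine ⟨StructuredArrow.homMk (eqToHom hr) ?_⟩
    apply jdisc_hom_ext
    rw [eqToHom_map]
    rw [Comma.comp_left, CostructuredArrow.eqToHom_left, unop_comp, eqToHom_unop,
      Comma.comp_left, Comma.eqToHom_left, hleft]
    simp [A₀, g₀, h']
    exact Category.id_comp _
  have : Nonempty (StructuredArrow b (jdisc u X)) := ⟨A₀⟩
  apply zigzag_isConnected
  intro A B
  obtain ⟨a⟩ := key A
  obtain ⟨c⟩ := key B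
  exact Relation.ReflTransGen.trans (Relation.ReflTransGen.single (Zag.of_inv a))
    (Relation.ReflTransGen.single (Zag.of_hom c))

section Lan

variable {D : Type u} [SmallCategory D] {E : Type u} [SmallCategory E]
  (L : D ⥤ E)

/-- Evaluating the left Kan extension functor at an object is (naturally in the extended
functor) computing a colimit over the costructured arrow category. -/
def lanCompEvaluationIso (X : E) :
    (Functor.whiskeringLeft (CostructuredArrow L X) D AddCommGrpCat.{u}).obj (CostructuredArrow.proj L X)
      ⋙ colim ≅ L.lan ⋙ (evaluation E AddCommGrpCat.{u}).obj X :=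
  NatIso.ofComponents (fun F => (L.leftKanExtensionObjIsoColimit F X).symm) (by
    intro F G η
    dsimp
    apply colimit.hom_ext
    intro k
    erw [ι_colimMap_assoc, Functor.ι_leftKanExtensionObjIsoColimit_inv,
      Functor.ι_leftKanExtensionObjIsoColimit_inv_assoc]
    simp only [Functor.whiskerLeft_app]
    erw [(L.lan.map η).naturality k.hom]
    erw [← Category.assoc, ← Category.assoc]
    congr 1
    have h := NatTrans.congr_app (L.lanUnit.naturality η) k.left
    simp only [NatTrans.comp_app] at h
    exact h)

end Lan

instance : AB4 AddCommGrpCat.{u} := AB4.of_AB5 _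

set_option synthInstance.maxHeartbeats 800000 in
set_option maxHeartbeats 1600000 in
/-- The left Kan extension along `(CostructuredArrow.map u).op` is exact. -/
lemma preservesFiniteLimits_lan :
    PreservesFiniteLimits ((CostructuredArrow.map u).op.lan :
      ((CostructuredArrow yoneda T')ᵒᵖ ⥤ AddCommGrpCat.{u}) ⥤
        ((CostructuredArrow yoneda T)ᵒᵖ ⥤ AddCommGrpCat.{u})) := by
  refine preservesFiniteLimits_of_evaluation _ fun X => ?_
  letI : PreservesFiniteLimits
      (colim (J := CostructuredArrow (CostructuredArrow.map u).op X) (C := AddCommGrpCat.{u})) := by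
    letI : PreservesFiniteLimits ((Functor.whiskeringLeft (Discrete (Fib u X.unop)) _
        AddCommGrpCat.{u}).obj (jdisc u X)) :=
      ⟨fun J _ _ => whiskeringLeft_preservesLimitsOfShape J _⟩
    letI := comp_preservesFiniteLimits ((Functor.whiskeringLeft (Discrete (Fib u X.unop)) _
        AddCommGrpCat.{u}).obj (jdisc u X)) colim
    exact preservesFiniteLimits_of_natIso (Functor.Final.colimIso (jdisc u X))
  letI : PreservesFiniteLimits ((Functor.whiskeringLeft _ _ AddCommGrpCat.{u}).obj
      (CostructuredArrow.proj (CostructuredArrow.map u).op X)) :=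
    ⟨fun J _ _ => whiskeringLeft_preservesLimitsOfShape J _⟩
  letI := comp_preservesFiniteLimits ((Functor.whiskeringLeft _ _ AddCommGrpCat.{u}).obj
      (CostructuredArrow.proj (CostructuredArrow.map u).op X)) colim
  exact preservesFiniteLimits_of_natIso (lanCompEvaluationIso _ X)

end Statement8Aux

/-- Let `(C, J)` be a site and `u : T′ ⟶ T` a morphism of presheaves of
sets on `C`. The inverse image functor `u⁻¹` (precomposition with `u_C`; the
`IsContinuous` instance hypothesis records the fact, noted in the context, that
precomposition preserves sheaves) from abelian sheaves on `(C_{/T}, J_T)` to abelian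
sheaves on `(C_{/T′}, J_{T′})` admits an exact left adjoint, and consequently preserves
injective objects. -/
theorem statement8 {C : Type u} [SmallCategory C] (J : GrothendieckTopology C)
    {T' T : Cᵒᵖ ⥤ Type u} (u : T' ⟶ T)
    [(CostructuredArrow.map u).IsContinuous (sliceTopology J T') (sliceTopology J T)] :
    (∃ L : Sheaf (sliceTopology J T') AddCommGrpCat.{u} ⥤
        Sheaf (sliceTopology J T) AddCommGrpCat.{u},
      Nonempty (L ⊣ (CostructuredArrow.map u).sheafPushforwardContinuous AddCommGrpCat.{u}
          (sliceTopology J T') (sliceTopology J T)) ∧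
      Nonempty (PreservesFiniteLimits L) ∧ Nonempty (PreservesFiniteColimits L)) ∧
    ∀ I : Sheaf (sliceTopology J T) AddCommGrpCat.{u}, Injective I →
      Injective (((CostructuredArrow.map u).sheafPushforwardContinuous AddCommGrpCat.{u}
        (sliceTopology J T') (sliceTopology J T)).obj I) := by
  letI := Statement8Aux.preservesFiniteLimits_lan u
  let L := (CostructuredArrow.map u).sheafPullback AddCommGrpCat.{u}
    (sliceTopology J T') (sliceTopology J T)
  have adj := (CostructuredArrow.map u).sheafAdjunctionContinuous AddCommGrpCat.{u}
    (sliceTopology J T') (sliceTopology J T)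
  haveI hfl : PreservesFiniteLimits L := by
    haveI : PreservesFiniteLimits (Functor.sheafPullbackConstruction.sheafPullback
        (CostructuredArrow.map u) AddCommGrpCat.{u} (sliceTopology J T') (sliceTopology J T)) := by
     haveI : PreservesFiniteLimits ((CostructuredArrow.map u).op.lan ⋙
        presheafToSheaf (sliceTopology J T) AddCommGrpCat.{u}) := comp_preservesFiniteLimits _ _
     exact comp_preservesFiniteLimits
      (sheafToPresheaf (sliceTopology J T') AddCommGrpCat.{u}) _
    exact preservesFiniteLimits_of_natIso
      (Functor.sheafPullbackConstruction.sheafPullbackIso _ _ _ _).symm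
  haveI : PreservesColimits L := adj.leftAdjoint_preservesColimits
  haveI hfc : PreservesFiniteColimits L := inferInstance
  haveI : L.PreservesMonomorphisms := inferInstance
  refine ⟨⟨L, ⟨adj⟩, ⟨hfl⟩, ⟨hfc⟩⟩, fun I hI => ?_⟩
  haveI := hI
  exact Injective.injective_of_adjoint adj I

end
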